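/- arXiv:1911.00864 — 3 statements merged into one kernel-verified Lean document; each statement's English description precedes it below -/
import Mathlib

section
/- Suppose all voters have dichotomous preferences (approval ballots A_i). An outcome W satisfies IPSC if and only if (i) there is no set N' ⊆ N of voters with w(⋃_{i∈N'} A_i ∩ W) < b(N')·L/n and some candidate c ∈ (⋂_{i∈N'} A_i) \ (⋃_{i∈N'} A_i ∩ W) with w({c} ∪ (⋃_{i∈N'} A_i ∩ W)) ≤ b(N')·L/n, and (ii) W is exhaustive. -/
open Finset
open scoped Classical

noncomputable section

/-- Each voter's weak preference relation `pref i` is a total preorder. -/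
def TotalPreorder {V C : Type} (pref : V → C → C → Prop) : Prop :=
  (∀ i a b, pref i a b ∨ pref i b a) ∧
  (∀ i a b c, pref i a b → pref i b c → pref i a c)

/-- `nth i j` is voter `i`'s `(j+1)`-th most preferred candidate under a fixed
tie-breaking: an enumeration of all candidates consistent with `pref i`. -/
def TieBreak {V C : Type} [Fintype C] (pref : V → C → C → Prop) (nth : V → ℕ → C) : Prop :=
  (∀ i c, ∃ j, j < Fintype.card C ∧ nth i j = c) ∧
  (∀ i j j', j ≤ j' → pref i (nth i j) (nth i j'))

/-- `N'` solidly supports `C'`: every voter in `N'` weakly prefers every member of `C'`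
to every non-member. -/
def Solid {V C : Type} (pref : V → C → C → Prop) (N' : Finset V) (C' : Finset C) : Prop :=
  ∀ i ∈ N', ∀ c' ∈ C', ∀ c, c ∉ C' → pref i c' c

/-- `P(N',C') = {c : ∃ i ∈ N', c ≿_i c^{(i,|C'|)}}` where `c^{(i,j)} = nth i (j-1)`. -/
def Pset {V C : Type} [Fintype C] (pref : V → C → C → Prop) (nth : V → ℕ → C)
    (N' : Finset V) (C' : Finset C) : Finset C :=
  Finset.univ.filter fun c => ∃ i ∈ N', pref i c (nth i (C'.card - 1))

/-- total cost of a set of candidates -/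
def cost {C : Type} (w : C → ℝ) (S : Finset C) : ℝ := ∑ c ∈ S, w c

/-- Comparative PSC for PB with general (weak) preferences. -/
def CPSC {V C : Type} [Fintype V] [Fintype C] (pref : V → C → C → Prop) (nth : V → ℕ → C)
    (b : V → ℝ) (w : C → ℝ) (L : ℝ) (W : Finset C) : Prop :=
  ¬ ∃ (N' : Finset V) (C' : Finset C), Solid pref N' C' ∧
      cost w (Pset pref nth N' C' ∩ W) < (∑ i ∈ N', b i) * L / (Fintype.card V : ℝ) ∧
      ∃ C'' ⊆ C', cost w (Pset pref nth N' C' ∩ W) < cost w C'' ∧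
        cost w C'' ≤ (∑ i ∈ N', b i) * L / (Fintype.card V : ℝ)

/-- Inclusion PSC for PB with general (weak) preferences. -/
def IPSC {V C : Type} [Fintype V] [Fintype C] (pref : V → C → C → Prop) (nth : V → ℕ → C)
    (b : V → ℝ) (w : C → ℝ) (L : ℝ) (W : Finset C) : Prop :=
  ¬ ∃ (N' : Finset V) (C' : Finset C), Solid pref N' C' ∧
      cost w (Pset pref nth N' C' ∩ W) < (∑ i ∈ N', b i) * L / (Fintype.card V : ℝ) ∧
      ∃ c ∈ C', c ∉ Pset pref nth N' C' ∩ W ∧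
        cost w (insert c (Pset pref nth N' C' ∩ W)) ≤ (∑ i ∈ N', b i) * L / (Fintype.card V : ℝ)

/-- `W` is exhaustive w.r.t. budget limit `L`. -/
def Exhaustive {C : Type} (w : C → ℝ) (L : ℝ) (W : Finset C) : Prop :=
  cost w W ≤ L ∧ ∀ c, c ∉ W → L < cost w (insert c W)

/-- `W` is a maximal cost outcome w.r.t. budget limit `L`. -/
def MaximalCost {C : Type} (w : C → ℝ) (L : ℝ) (W : Finset C) : Prop :=
  cost w W ≤ L ∧ ∀ C' : Finset C, cost w C' ≤ L → cost w C' ≤ cost w W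

/-- dichotomous preferences with approval sets `A i` -/
def Dichotomous {V C : Type} (pref : V → C → C → Prop) (A : V → Finset C) : Prop :=
  ∀ i a c, pref i a c ↔ (a ∈ A i ∨ c ∉ A i)

/-- `⋃_{i ∈ N'} A i` -/
def unionA {V C : Type} [Fintype C] (A : V → Finset C) (N' : Finset V) : Finset C :=
  Finset.univ.filter fun c => ∃ i ∈ N', c ∈ A i

/-- `⋂_{i ∈ N'} A i` -/
def interA {V C : Type} [Fintype C] (A : V → Finset C) (N' : Finset V) : Finset C :=
  Finset.univ.filter fun c => ∀ i ∈ N', c ∈ A i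


lemma cost_mono' {C : Type} {w : C → ℝ} (hw : ∀ c, 0 < w c) {S T : Finset C} (h : S ⊆ T) :
    cost w S ≤ cost w T :=
  Finset.sum_le_sum_of_subset_of_nonneg h (fun c _ _ => (hw c).le)

lemma cost_nonneg' {C : Type} {w : C → ℝ} (hw : ∀ c, 0 < w c) (S : Finset C) :
    0 ≤ cost w S :=
  Finset.sum_nonneg (fun c _ => (hw c).le)

lemma tb_nth_mem {V C : Type} [Fintype C] {pref : V → C → C → Prop} {nth : V → ℕ → C}
    {A : V → Finset C} (hnth : TieBreak pref nth) (hdich : Dichotomous pref A)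
    (i : V) {j : ℕ} (hj : j < (A i).card) : nth i j ∈ A i := by
  by_contra h
  have hsub : A i ⊆ (Finset.range j).image (nth i) := by
    intro a ha
    obtain ⟨j', _, he⟩ := hnth.1 i a
    have hj' : j' < j := by
      by_contra hge
      push_neg at hge
      have hp := hnth.2 i j j' hge
      rcases (hdich i (nth i j) (nth i j')).1 hp with h1 | h1
      · exact h h1
      · rw [he] at h1; exact h1 ha
    exact Finset.mem_image.2 ⟨j', Finset.mem_range.2 hj', he⟩
  have h2 : (A i).card ≤ j := by
    calc (A i).card ≤ ((Finset.range j).image (nth i)).card := Finset.card_le_card hsub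
      _ ≤ (Finset.range j).card := Finset.card_image_le
      _ = j := Finset.card_range j
  omega

lemma tb_nth_notMem {V C : Type} [Fintype C] {pref : V → C → C → Prop} {nth : V → ℕ → C}
    {A : V → Finset C} (hnth : TieBreak pref nth) (hdich : Dichotomous pref A)
    (i : V) {k : ℕ} (hk1 : 1 ≤ k) (hk : (A i).card < k) (hkC : k ≤ Fintype.card C) :
    nth i (k - 1) ∉ A i := by
  intro hmem
  have hinj : Set.InjOn (nth i) ↑(Finset.range (Fintype.card C)) := by
    rw [← Finset.card_image_iff]
    have himg : (Finset.range (Fintype.card C)).image (nth i) = Finset.univ := by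
      apply Finset.eq_univ_of_forall
      intro c
      obtain ⟨j, hj, he⟩ := hnth.1 i c
      exact Finset.mem_image.2 ⟨j, Finset.mem_range.2 hj, he⟩
    rw [himg, Finset.card_univ, Finset.card_range]
  have hsub : (Finset.range k).image (nth i) ⊆ A i := by
    intro a ha
    obtain ⟨j, hj, he⟩ := Finset.mem_image.1 ha
    rw [Finset.mem_range] at hj
    have hjk : j ≤ k - 1 := by omega
    have hp := hnth.2 i j (k - 1) hjk
    rcases (hdich i (nth i j) (nth i (k - 1))).1 hp with h1 | h1
    · rw [he] at h1; exact h1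
    · exact absurd hmem h1
  have hcard : ((Finset.range k).image (nth i)).card = k := by
    rw [Finset.card_image_of_injOn
      (hinj.mono (Finset.coe_subset.2 (Finset.range_subset_range.2 hkC))), Finset.card_range]
  have := Finset.card_le_card hsub
  omega

lemma Pset_eq_unionA {V C : Type} [Fintype C] {pref : V → C → C → Prop} {nth : V → ℕ → C}
    {A : V → Finset C} (hnth : TieBreak pref nth) (hdich : Dichotomous pref A)
    {N' : Finset V} {C' : Finset C} (hne : C'.Nonempty)
    (h : ∀ i ∈ N', C'.card ≤ (A i).card) :
    Pset pref nth N' C' = unionA A N' := by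
  have hk1 : 1 ≤ C'.card := Finset.card_pos.2 hne
  ext c
  simp only [Pset, unionA, Finset.mem_filter, Finset.mem_univ, true_and]
  constructor
  · rintro ⟨i, hi, hp⟩
    refine ⟨i, hi, ?_⟩
    rcases (hdich i c _).1 hp with h1 | h1
    · exact h1
    · exact absurd (tb_nth_mem hnth hdich i (by have := h i hi; omega)) h1
  · rintro ⟨i, hi, hc⟩
    exact ⟨i, hi, (hdich i c _).2 (Or.inl hc)⟩

lemma Pset_eq_univ {V C : Type} [Fintype C] {pref : V → C → C → Prop} {nth : V → ℕ → C}
    {A : V → Finset C} (hnth : TieBreak pref nth) (hdich : Dichotomous pref A)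
    {N' : Finset V} {C' : Finset C} (hk1 : 1 ≤ C'.card)
    {i₀ : V} (hi₀ : i₀ ∈ N') (hlt : (A i₀).card < C'.card) :
    Pset pref nth N' C' = Finset.univ := by
  apply Finset.eq_univ_of_forall
  intro c
  simp only [Pset, Finset.mem_filter, Finset.mem_univ, true_and]
  exact ⟨i₀, hi₀, (hdich i₀ c _).2
    (Or.inr (tb_nth_notMem hnth hdich i₀ hk1 hlt (Finset.card_le_univ C')))⟩

lemma solid_dich {V C : Type} {pref : V → C → C → Prop} {A : V → Finset C}
    (hdich : Dichotomous pref A) {N' : Finset V} {C' : Finset C}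
    (hs : Solid pref N' C') {i : V} (hi : i ∈ N') : C' ⊆ A i ∨ A i ⊆ C' := by
  by_cases h : A i ⊆ C'
  · exact Or.inr h
  · obtain ⟨a, ha, haC⟩ := Finset.not_subset.1 h
    left
    intro c' hc'
    rcases (hdich i c' a).1 (hs i hi c' hc' a haC) with h1 | h1
    · exact h1
    · exact absurd ha h1

/-- characterization of IPSC under dichotomous preferences. -/
theorem ipsc_approval_characterization {V C : Type} [Fintype V] [Fintype C] [Nonempty V]
    (pref : V → C → C → Prop) (nth : V → ℕ → C) (A : V → Finset C)
    (b : V → ℝ) (w : C → ℝ) (L : ℝ)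
    (hpref : TotalPreorder pref) (hnth : TieBreak pref nth) (hdich : Dichotomous pref A)
    (hb : ∀ i, 0 < b i) (hbsum : (∑ i, b i) = (Fintype.card V : ℝ))
    (hw : ∀ c, 0 < w c) (hL : 0 < L)
    (W : Finset C) (hWL : cost w W ≤ L) :
    IPSC pref nth b w L W ↔
      ((¬ ∃ N' : Finset V,
          cost w (unionA A N' ∩ W) < (∑ i ∈ N', b i) * L / (Fintype.card V : ℝ) ∧
          ∃ c ∈ interA A N', c ∉ unionA A N' ∩ W ∧
            cost w (insert c (unionA A N' ∩ W)) ≤ (∑ i ∈ N', b i) * L / (Fintype.card V : ℝ)) ∧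
        Exhaustive w L W) := by
  have hn : (0:ℝ) < (Fintype.card V : ℝ) := by exact_mod_cast Fintype.card_pos
  constructor
  · intro hipsc
    constructor
    · rintro ⟨N', h1, c, hcI, hcU, h2⟩
      apply hipsc
      have hsum_pos : 0 < ∑ i ∈ N', b i := by
        by_contra hle
        push_neg at hle
        have h0 : (∑ i ∈ N', b i) * L / (Fintype.card V : ℝ) ≤ 0 :=
          div_nonpos_of_nonpos_of_nonneg (mul_nonpos_iff.2 (Or.inr ⟨hle, hL.le⟩)) hn.le
        exact absurd (lt_of_le_of_lt (cost_nonneg' hw _) h1) (not_lt.2 h0)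
      have hN'ne : N'.Nonempty := by
        rcases Finset.eq_empty_or_nonempty N' with h | h
        · rw [h] at hsum_pos; simp at hsum_pos
        · exact h
      have hsub : ∀ i ∈ N', interA A N' ⊆ A i := by
        intro i hi x hx
        simp only [interA, Finset.mem_filter] at hx
        exact hx.2 i hi
      have hCne : (interA A N').Nonempty := ⟨c, hcI⟩
      have hP : Pset pref nth N' (interA A N') = unionA A N' :=
        Pset_eq_unionA hnth hdich hCne
          (fun i hi => Finset.card_le_card (hsub i hi))
      refine ⟨N', interA A N', ?_, ?_, c, hcI, ?_, ?_⟩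
      · intro i hi c' hc' d _
        exact (hdich i c' d).2 (Or.inl (hsub i hi hc'))
      · rw [hP]; exact h1
      · rw [hP]; exact hcU
      · rw [hP]; exact h2
    · refine ⟨hWL, ?_⟩
      intro c hcW
      by_contra hlt
      push_neg at hlt
      apply hipsc
      have hbound : (∑ i ∈ (Finset.univ : Finset V), b i) * L / (Fintype.card V : ℝ) = L := by
        rw [hbsum]
        field_simp
      have hPW : Pset pref nth Finset.univ Finset.univ ∩ W ⊆ W := Finset.inter_subset_right
      have hcost1 : cost w (Pset pref nth Finset.univ Finset.univ ∩ W) ≤ cost w W :=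
        cost_mono' hw hPW
      have hins : cost w (insert c W) = w c + cost w W := Finset.sum_insert hcW
      refine ⟨Finset.univ, Finset.univ, ?_, ?_, c, Finset.mem_univ c, ?_, ?_⟩
      · intro i _ c' _ d hd
        exact absurd (Finset.mem_univ d) hd
      · rw [hbound]
        have := hw c
        linarith
      · intro h
        exact hcW (Finset.mem_inter.1 h).2
      · rw [hbound]
        calc cost w (insert c (Pset pref nth Finset.univ Finset.univ ∩ W))
            ≤ cost w (insert c W) :=
              cost_mono' hw (Finset.insert_subset_insert c hPW)
          _ ≤ L := hlt
  · rintro ⟨hno, hex⟩ ⟨N', C', hsolid, h1, c, hcC, hcP, h2⟩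
    have hk1 : 1 ≤ C'.card := Finset.card_pos.2 ⟨c, hcC⟩
    by_cases hall : ∀ i ∈ N', C'.card ≤ (A i).card
    · have hP := Pset_eq_unionA hnth hdich ⟨c, hcC⟩ hall
      rw [hP] at h1 hcP h2
      apply hno
      refine ⟨N', h1, c, ?_, hcP, h2⟩
      simp only [interA, Finset.mem_filter, Finset.mem_univ, true_and]
      intro i hi
      rcases solid_dich hdich hsolid hi with hs | hs
      · exact hs hcC
      · have heq : A i = C' := Finset.eq_of_subset_of_card_le hs (hall i hi)
        rw [heq]; exact hcC
    · push_neg at hall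
      obtain ⟨i₀, hi₀, hlt⟩ := hall
      have hP := Pset_eq_univ hnth hdich hk1 hi₀ hlt
      rw [hP, Finset.univ_inter] at h1 hcP h2
      have hble : (∑ i ∈ N', b i) * L / (Fintype.card V : ℝ) ≤ L := by
        rw [div_le_iff₀ hn]
        have hs : ∑ i ∈ N', b i ≤ ∑ i, b i :=
          Finset.sum_le_sum_of_subset_of_nonneg (Finset.subset_univ N') (fun i _ _ => (hb i).le)
        rw [hbsum] at hs
        nlinarith
      linarith [hex.2 c hcP, h2.trans hble]
end
end

section
/- In the PB setting with dichotomous preferences where all voters approve all candidates, an outcome satisfies CPSC if and only if it is a maximum-weight feasible subset (knapsack optimum): W ⊆ C with w(W) ≤ L and w(W) ≥ w(C') for all C' ⊆ C with w(C') ≤ L. -/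
open Finset
open scoped Classical

noncomputable section

/-
When every voter approves every candidate, `P(N', C')` is all of `C` as soon as `N'` is
nonempty, so the only constraint CPSC imposes is that no `C'' ⊆ C` with
`w(C'') ≤ b(N') L / n` outweighs `W`. Since `b(N') ≤ b(N) = n`, the binding group is `N' = N`
with share exactly `L`, and the condition becomes knapsack optimality of `W`.
-/

section Pset

variable {V C : Type} [Fintype C] (pref : V → C → C → Prop) (nth : V → ℕ → C)

theorem Pset_empty_left (C' : Finset C) : Pset pref nth ∅ C' = ∅ := by
  simp [Pset]

theorem Pset_eq_univ_of_forall_pref (hall : ∀ i a c, pref i a c) {N' : Finset V}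
    (hN' : N'.Nonempty) (C' : Finset C) : Pset pref nth N' C' = univ := by
  obtain ⟨i, hi⟩ := hN'
  ext c
  simpa [Pset] using ⟨i, hi, hall _ _ _⟩

end Pset

theorem solid_univ {V C : Type} [Fintype C] (pref : V → C → C → Prop) (N' : Finset V) :
    Solid pref N' (univ : Finset C) := by
  simp [Solid]

section Share

variable {V : Type} [Fintype V] {b : V → ℝ} (L : ℝ)

theorem sum_univ_mul_div_card [Nonempty V] (hbsum : ∑ i, b i = Fintype.card V) :
    (∑ i, b i) * L / Fintype.card V = L := by
  have hn : (Fintype.card V : ℝ) ≠ 0 := by positivity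
  rw [hbsum, mul_div_cancel_left₀ _ hn]

theorem sum_mul_div_card_le (hb : ∀ i, 0 ≤ b i) (hbsum : ∑ i, b i ≤ Fintype.card V)
    (hL : 0 ≤ L) (N' : Finset V) :
    (∑ i ∈ N', b i) * L / Fintype.card V ≤ L := by
  have hN' : ∑ i ∈ N', b i ≤ Fintype.card V :=
    (sum_le_sum_of_subset_of_nonneg (subset_univ _) fun i _ _ => hb i).trans hbsum
  refine div_le_of_le_mul₀ (Nat.cast_nonneg _) hL ?_
  rw [mul_comm L]
  exact mul_le_mul_of_nonneg_right hN' hL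

end Share

theorem cpsc_iff_knapsack_general {V C : Type} [Fintype V] [Fintype C] [Nonempty V]
    (pref : V → C → C → Prop) (nth : V → ℕ → C) (b : V → ℝ) (w : C → ℝ) (L : ℝ)
    (hall : ∀ i a c, pref i a c)
    (hb : ∀ i, 0 < b i) (hbsum : (∑ i, b i) = (Fintype.card V : ℝ))
    (hL : 0 < L)
    (W : Finset C) (hWL : cost w W ≤ L) :
    CPSC pref nth b w L W ↔ MaximalCost w L W := by
  constructor
  · intro hcpsc
    refine ⟨hWL, fun C' hC' => ?_⟩
    by_contra! hlt
    have hP : Pset pref nth univ univ ∩ W = W := by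
      rw [Pset_eq_univ_of_forall_pref pref nth hall univ_nonempty, univ_inter]
    apply hcpsc
    refine ⟨univ, univ, solid_univ pref univ, ?_, C', subset_univ _, ?_, ?_⟩ <;>
      simp only [hP, sum_univ_mul_div_card L hbsum] <;> linarith
  · rintro ⟨-, hmax⟩ ⟨N', C', -, hlt, C'', -, hlt', hle⟩
    rcases N'.eq_empty_or_nonempty with rfl | hN'
    · simp [Pset_empty_left, cost] at hlt
    · rw [Pset_eq_univ_of_forall_pref pref nth hall hN', univ_inter] at hlt'
      have hshare := sum_mul_div_card_le L (fun i => (hb i).le) hbsum.le hL.le N'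
      exact (hlt'.trans_le (hmax _ (hle.trans hshare))).false

/-- when every voter is indifferent among all candidates (approves
everything), CPSC is equivalent to being a maximum-weight feasible (knapsack
optimal) outcome. -/
theorem cpsc_iff_knapsack {V C : Type} [Fintype V] [Fintype C] [Nonempty V]
    (pref : V → C → C → Prop) (nth : V → ℕ → C) (b : V → ℝ) (w : C → ℝ) (L : ℝ)
    (hall : ∀ i a c, pref i a c)
    (hnth : TieBreak pref nth)
    (hb : ∀ i, 0 < b i) (hbsum : (∑ i, b i) = (Fintype.card V : ℝ))
    (hw : ∀ c, 0 < w c) (hL : 0 < L)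
    (W : Finset C) (hWL : cost w W ≤ L) :
    CPSC pref nth b w L W ↔ MaximalCost w L W :=
  cpsc_iff_knapsack_general pref nth b w L hall hb hbsum hL W hWL
end
end

section
/- For multi-winner approval voting, EJR does not imply IPSC: there exists a 12-voter instance (voters 1–3 approve {a,x}, voters 4–6 approve {a,y}, voters 7–12 approve {u,v,w,x,y,z}, k = 6) where the committee {u,v,w,x,y,z} satisfies Extended Justified Representation but violates IPSC. -/
open Finset
open scoped Classical

noncomputable section

/-- Proportional Justified Representation for multi-winner approval voting. -/
def PJR {V C : Type} [Fintype V] [Fintype C] (A : V → Finset C) (k : ℕ) (W : Finset C) : Prop :=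
  ∀ ℓ : ℕ, 0 < ℓ → ℓ ≤ k →
    ¬ ∃ Ns : Finset V, (ℓ * Fintype.card V : ℝ) / k ≤ Ns.card ∧
      ℓ ≤ (interA A Ns).card ∧ (unionA A Ns ∩ W).card < ℓ

/-- Extended Justified Representation for multi-winner approval voting. -/
def EJR {V C : Type} [Fintype V] [Fintype C] (A : V → Finset C) (k : ℕ) (W : Finset C) : Prop :=
  ∀ ℓ : ℕ, 0 < ℓ → ℓ ≤ k →
    ¬ ∃ Ns : Finset V, (ℓ * Fintype.card V : ℝ) / k ≤ Ns.card ∧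
      ℓ ≤ (interA A Ns).card ∧ ∀ i ∈ Ns, (A i ∩ W).card < ℓ

/-- IPSC in its approval-ballot form. -/
def IPSCapp {V C : Type} [Fintype V] [Fintype C] (A : V → Finset C)
    (b : V → ℝ) (w : C → ℝ) (L : ℝ) (W : Finset C) : Prop :=
  Exhaustive w L W ∧
  ¬ ∃ N' : Finset V,
      cost w (unionA A N' ∩ W) < (∑ i ∈ N', b i) * L / (Fintype.card V : ℝ) ∧
      ∃ c ∈ interA A N', c ∉ unionA A N' ∩ W ∧
        cost w (insert c (unionA A N' ∩ W)) ≤ (∑ i ∈ N', b i) * L / (Fintype.card V : ℝ)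

/-- candidates a=0, u=1, v=2, w=3, x=4, y=5, z=6; voters 1-3 approve {a,x},
voters 4-6 approve {a,y}, voters 7-12 approve {u,v,w,x,y,z}. -/
def A18 : Fin 12 → Finset (Fin 7) := fun i =>
  if (i : ℕ) < 3 then {0, 4} else if (i : ℕ) < 6 then {0, 5} else {1, 2, 3, 4, 5, 6}

/-!
EJR holds: every voter approves some winner and voters 7–12 approve all six, so a violating
group needs `ℓ ≥ 2`, hence at least `2ℓ ≥ 4` voters among voters 1–6. Such a group meets both
blocks 1–3 and 4–6, whose only common candidate is `a`, so it is not `ℓ`-cohesive.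

IPSC fails for the group of voters 1–6: they all approve the unelected `a`, the committee gives
them only `x` and `y`, and their share `6 · 6 / 12 = 3` affords `{a, x, y}`.
-/

section Approval

variable {V C : Type} [Fintype C] {A : V → Finset C}

theorem mem_interA {N' : Finset V} {c : C} : c ∈ interA A N' ↔ ∀ i ∈ N', c ∈ A i := by
  simp [interA]

theorem card_interA_le_card_inter [DecidableEq C] {N' : Finset V} {i j : V} (hi : i ∈ N')
    (hj : j ∈ N') : #(interA A N') ≤ #(A i ∩ A j) :=
  card_le_card fun _ hc => mem_inter.2 ⟨mem_interA.1 hc i hi, mem_interA.1 hc j hj⟩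

omit [Fintype C] in
theorem cost_one (S : Finset C) : cost (fun _ => (1 : ℝ)) S = #S := by
  simp [cost]

variable [Fintype V] [inst : DecidableEq C]

-- `EJR` and `IPSCapp` intersect via classical decidable equality; these two lemmas accept any
-- instance, so that concrete profiles can be evaluated by `decide`.
theorem EJR_of_forall_exists_le {k : ℕ} {W : Finset C}
    (h : ∀ ℓ : ℕ, 0 < ℓ → ℓ ≤ k → ∀ Ns : Finset V, (ℓ * Fintype.card V : ℝ) / k ≤ #Ns →
      ℓ ≤ #(interA A Ns) → ∃ i ∈ Ns, ℓ ≤ #(A i ∩ W)) :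
    EJR A k W := by
  obtain rfl := Subsingleton.elim inst fun a b => Classical.propDecidable (a = b)
  rintro ℓ hℓ hℓk ⟨Ns, hsize, hcohesive, hsat⟩
  obtain ⟨i, hi, hrep⟩ := h ℓ hℓ hℓk Ns hsize hcohesive
  exact (hsat i hi).not_ge hrep

theorem not_IPSCapp_of_affordable_common_candidate {L : ℝ} {W : Finset C} {N' : Finset V}
    {c : C} (hc : c ∈ interA A N') (hcW : c ∉ W)
    (hafford : (#(unionA A N' ∩ W) + 1 : ℝ) ≤ #N' * L / Fintype.card V) :
    ¬ IPSCapp A (fun _ => 1) (fun _ => 1) L W := by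
  obtain rfl := Subsingleton.elim inst fun a b => Classical.propDecidable (a = b)
  rintro ⟨-, hno⟩
  have hcU : c ∉ unionA A N' ∩ W := fun h => hcW (mem_inter.1 h).2
  refine hno ⟨N', ?_, c, hc, hcU, ?_⟩ <;>
    simp only [cost_one, sum_const, nsmul_eq_mul, mul_one, card_insert_of_notMem hcU,
      Nat.cast_add, Nat.cast_one] at hafford ⊢ <;>
    linarith

end Approval

theorem A18_of_lt_three {i : Fin 12} (h : (i : ℕ) < 3) : A18 i = {0, 4} := by
  simp [A18, h]

theorem A18_of_lt_six {i : Fin 12} (h₃ : 3 ≤ (i : ℕ)) (h₆ : (i : ℕ) < 6) : A18 i = {0, 5} := by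
  simp [A18, h₆, show ¬ (i : ℕ) < 3 by omega]

theorem A18_of_six_le {i : Fin 12} (h : 6 ≤ (i : ℕ)) : A18 i = {1, 2, 3, 4, 5, 6} := by
  simp [A18, show ¬ (i : ℕ) < 3 by omega, show ¬ (i : ℕ) < 6 by omega]

theorem exists_mem_A18_winner (i : Fin 12) :
    ∃ c ∈ A18 i, c ∈ ({1, 2, 3, 4, 5, 6} : Finset (Fin 7)) := by
  unfold A18; split_ifs <;> decide

theorem card_interA_A18_le_one {Ns : Finset (Fin 12)} (hNs : ∀ i ∈ Ns, (i : ℕ) < 6)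
    (hcard : 3 < #Ns) : #(interA A18 Ns) ≤ 1 := by
  obtain ⟨i, hi, hi'⟩ := exists_mem_notMem_of_card_lt_card
    (s := univ.filter fun i : Fin 12 => 3 ≤ (i : ℕ) ∧ (i : ℕ) < 6) (lt_of_eq_of_lt rfl hcard)
  obtain ⟨j, hj, hj'⟩ := exists_mem_notMem_of_card_lt_card
    (s := univ.filter fun i : Fin 12 => (i : ℕ) < 3) (lt_of_eq_of_lt rfl hcard)
  simp only [mem_filter, mem_univ, true_and, not_and, not_lt] at hi' hj'
  have hij := card_interA_le_card_inter (A := A18) hi hj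
  rw [A18_of_lt_three (by have := hNs i hi; omega), A18_of_lt_six hj' (hNs j hj)] at hij
  exact hij.trans (by decide)

theorem EJR_A18 : EJR A18 6 ({1, 2, 3, 4, 5, 6} : Finset (Fin 7)) := by
  refine EJR_of_forall_exists_le fun ℓ hℓ hℓk Ns hsize hcohesive => ?_
  by_contra! hsat
  have hsize' : 2 * ℓ ≤ #Ns := by
    simp only [Fintype.card_fin, Nat.cast_ofNat] at hsize
    exact_mod_cast (show (2 * ℓ : ℝ) ≤ #Ns by linarith)
  have hℓ2 : 2 ≤ ℓ := by
    obtain ⟨i, hi⟩ : Ns.Nonempty := card_pos.1 (by omega)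
    obtain ⟨c, hcA, hcW⟩ := exists_mem_A18_winner i
    have := card_pos.2 ⟨c, mem_inter.2 ⟨hcA, hcW⟩⟩
    have := hsat i hi
    omega
  have hfirst_six : ∀ i ∈ Ns, (i : ℕ) < 6 := by
    intro i hi
    by_contra h
    have := hsat i hi
    rw [A18_of_six_le (by omega), inter_self] at this
    have hcard_winners : #({1, 2, 3, 4, 5, 6} : Finset (Fin 7)) = 6 := rfl
    omega
  have := card_interA_A18_le_one hfirst_six (by omega)
  omega

theorem not_IPSCapp_A18 :
    ¬ IPSCapp A18 (fun _ => (1 : ℝ)) (fun _ => (1 : ℝ)) 6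
        ({1, 2, 3, 4, 5, 6} : Finset (Fin 7)) := by
  refine not_IPSCapp_of_affordable_common_candidate (N' := {0, 1, 2, 3, 4, 5}) (c := 0)
    (mem_interA.2 (by decide)) (by decide) ?_
  have hU : unionA A18 {0, 1, 2, 3, 4, 5} ∩ {1, 2, 3, 4, 5, 6} = ({4, 5} : Finset (Fin 7)) := by
    ext c; fin_cases c <;> simp [unionA, A18]
  simp [hU]
  norm_num

/-- with k = 6, the committee {u,v,w,x,y,z} satisfies EJR but
violates IPSC. -/
theorem ejr_not_implies_ipsc :
    EJR A18 6 ({1, 2, 3, 4, 5, 6} : Finset (Fin 7)) ∧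
    ¬ IPSCapp A18 (fun _ => (1 : ℝ)) (fun _ => (1 : ℝ)) 6
        ({1, 2, 3, 4, 5, 6} : Finset (Fin 7)) :=
  ⟨EJR_A18, not_IPSCapp_A18⟩
end
end
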